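/- Let f : EuclideanSpace ℝ (Fin n) → ℝ be differentiable with gradient ∇f Lipschitz continuous with constant L_g. Let x ∈ EuclideanSpace ℝ (Fin n), Δ > 0, κ > 0, κ_H ≥ 0, and let m be a quadratic model about x, m(y) = c + ⟨g, y − x⟩ + (1/2)·⟨y − x, H·(y − x)⟩ with H symmetric and ‖H‖ ≤ κ_H. If |m(y) − f(x) − ⟨∇f(x), y − x⟩| ≤ κ·Δ² for all y in the closed ball B(x,Δ), then m is fully linear for f in B(x,Δ) with constants κ_mf = κ + L_g/2 and κ_mg = 2κ + L_g + 2κ_H. -/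

import Mathlib

open scoped RealInnerProductSpace
open Metric

noncomputable section

/-- Matrix–vector multiplication as a map on Euclidean space. -/
def mulVecE {n : ℕ} (H : Matrix (Fin n) (Fin n) ℝ) (v : EuclideanSpace ℝ (Fin n)) :
    EuclideanSpace ℝ (Fin n) :=
  (EuclideanSpace.equiv (Fin n) ℝ).symm (H.mulVec (EuclideanSpace.equiv (Fin n) ℝ v))

/-- Operator 2-norm of a matrix (the norm induced by the Euclidean vector norm). -/
def opNorm {n : ℕ} (H : Matrix (Fin n) (Fin n) ℝ) : ℝ :=
  sSup {r : ℝ | ∃ v : EuclideanSpace ℝ (Fin n), ‖v‖ ≤ 1 ∧ r = ‖mulVecE H v‖}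

/-- Quadratic model about `x` with data `(c, g, H)`. -/
def qm {n : ℕ} (x : EuclideanSpace ℝ (Fin n)) (c : ℝ) (g : EuclideanSpace ℝ (Fin n))
    (H : Matrix (Fin n) (Fin n) ℝ) (y : EuclideanSpace ℝ (Fin n)) : ℝ :=
  c + ⟪g, y - x⟫ + (1 / 2) * ⟪y - x, mulVecE H (y - x)⟫

/-- `m` is a fully linear model for `f` on the closed ball `B(x, Δ)`. -/
def IsFullyLinear {n : ℕ} (f m : EuclideanSpace ℝ (Fin n) → ℝ)
    (x : EuclideanSpace ℝ (Fin n)) (Δ κmf κmg : ℝ) : Prop :=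
  ∀ y ∈ closedBall x Δ,
    |m y - f y| ≤ κmf * Δ ^ 2 ∧ ‖gradient m y - gradient f y‖ ≤ κmg * Δ

/-- `m` is a fully quadratic model for `f` on the closed ball `B(x, Δ)`. -/
def IsFullyQuadratic {n : ℕ} (f m : EuclideanSpace ℝ (Fin n) → ℝ)
    (x : EuclideanSpace ℝ (Fin n)) (Δ κmf κmg κmh : ℝ) : Prop :=
  ∀ y ∈ closedBall x Δ,
    |m y - f y| ≤ κmf * Δ ^ 3 ∧ ‖gradient m y - gradient f y‖ ≤ κmg * Δ ^ 2 ∧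
      ‖fderiv ℝ (gradient m) y - fderiv ℝ (gradient f) y‖ ≤ κmh * Δ

/-- Smallest eigenvalue of a symmetric matrix: the minimum of `⟪u, H u⟫` over unit vectors. -/
def lambdaMin {n : ℕ} (H : Matrix (Fin n) (Fin n) ℝ) : ℝ :=
  sInf {r : ℝ | ∃ u : EuclideanSpace ℝ (Fin n), ‖u‖ = 1 ∧ r = ⟪u, mulVecE H u⟫}

/-- `τ(H) = max(-λ_min(H), 0)`. -/
def tau {n : ℕ} (H : Matrix (Fin n) (Fin n) ℝ) : ℝ := max (-lambdaMin H) 0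

/-- Hessian matrix of `f` at `x`. -/
def hessMat {n : ℕ} (f : EuclideanSpace ℝ (Fin n) → ℝ) (x : EuclideanSpace ℝ (Fin n)) :
    Matrix (Fin n) (Fin n) ℝ :=
  Matrix.of fun i j => fderiv ℝ (gradient f) x (EuclideanSpace.single j 1) i

/-- ℓ∞ operator norm of a matrix: the maximum absolute row sum. -/
def linftyNorm {m k : Type*} [Fintype m] [Fintype k] (A : Matrix m k ℝ) : ℝ :=
  sSup (Set.range fun i => ∑ j, |A i j|)

/-! The value estimate is the triangle inequality between the assumed accuracy and the descent
lemma `|f y - f x - ⟪∇f x, y - x⟫| ≤ L/2 ‖y - x‖²`. For the gradient, the constant and quadratic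
parts of `m y - f x - ⟪∇f x, y - x⟫` are even in `y - x` while the remaining part
`⟪g - ∇f x, y - x⟫` is odd, so comparing `x + u` with `x - u` gives `‖g - ∇f x‖ ≤ κΔ`; then
`∇m y - ∇f y = (g - ∇f x) + H (y - x) + (∇f x - ∇f y)`. -/

open InnerProductSpace

lemma mulVecE_eq_toEuclideanCLM {n : ℕ} (H : Matrix (Fin n) (Fin n) ℝ)
    (v : EuclideanSpace ℝ (Fin n)) : mulVecE H v = Matrix.toEuclideanCLM (𝕜 := ℝ) H v := rfl

lemma opNorm_eq_norm_toEuclideanCLM {n : ℕ} (H : Matrix (Fin n) (Fin n) ℝ) :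
    opNorm H = ‖Matrix.toEuclideanCLM (𝕜 := ℝ) H‖ := by
  rw [← ContinuousLinearMap.sSup_unitClosedBall_eq_norm, opNorm]
  congr 1
  ext r
  simp [mulVecE_eq_toEuclideanCLM, eq_comm]

lemma norm_mulVecE_le {n : ℕ} (H : Matrix (Fin n) (Fin n) ℝ) (v : EuclideanSpace ℝ (Fin n)) :
    ‖mulVecE H v‖ ≤ opNorm H * ‖v‖ := by
  rw [mulVecE_eq_toEuclideanCLM, opNorm_eq_norm_toEuclideanCLM]
  exact ContinuousLinearMap.le_opNorm _ v

lemma opNorm_nonneg {n : ℕ} (H : Matrix (Fin n) (Fin n) ℝ) : 0 ≤ opNorm H := by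
  rw [opNorm_eq_norm_toEuclideanCLM]
  exact norm_nonneg _

lemma inner_mulVecE_left {n : ℕ} {H : Matrix (Fin n) (Fin n) ℝ} (hH : H.IsSymm)
    (u w : EuclideanSpace ℝ (Fin n)) : ⟪mulVecE H u, w⟫ = ⟪u, mulVecE H w⟫ :=
  (Matrix.isSymmetric_toEuclideanLin_iff.2 (Matrix.isHermitian_iff_isSymm.2 hH)) u w

lemma hasGradientAt_qm {n : ℕ} {H : Matrix (Fin n) (Fin n) ℝ} (hH : H.IsSymm)
    (x : EuclideanSpace ℝ (Fin n)) (c : ℝ) (g y : EuclideanSpace ℝ (Fin n)) :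
    HasGradientAt (qm x c g H) (g + mulVecE H (y - x)) y := by
  have hv : HasFDerivAt (fun z => z - x) (ContinuousLinearMap.id ℝ _) y :=
    (hasFDerivAt_id y).sub_const x
  have hHv := (Matrix.toEuclideanCLM (n := Fin n) (𝕜 := ℝ) H).hasFDerivAt.comp y hv
  have hq := ((hasFDerivAt_const c y).add ((hasFDerivAt_const g y).inner ℝ hv)).add
    ((hv.inner ℝ hHv).const_mul (1 / 2 : ℝ))
  rw [hasGradientAt_iff_hasFDerivAt]
  refine hq.congr_fderiv ?_
  ext h
  simp only [zero_add, one_div, Function.comp_apply, ← mulVecE_eq_toEuclideanCLM,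
    ContinuousLinearMap.comp_id, add_apply, ContinuousLinearMap.comp_apply,
    ContinuousLinearMap.prod_apply, zero_apply, ContinuousLinearMap.id_apply,
    fderivInnerCLM_apply, inner_zero_left, add_zero, smul_apply, smul_eq_mul,
    map_add, toDual_apply_apply, add_right_inj]
  rw [← inner_mulVecE_left hH (y - x) h, real_inner_comm (mulVecE H (y - x)) h]
  ring

lemma abs_sub_sub_inner_le_of_lipschitzWith_gradient {E : Type*} [NormedAddCommGroup E]
    [InnerProductSpace ℝ E] [CompleteSpace E] {f : E → ℝ} {L : NNReal}
    (hf : Differentiable ℝ f) (hL : LipschitzWith L (gradient f)) (x y : E) :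
    |f y - f x - ⟪gradient f x, y - x⟫| ≤ L / 2 * ‖y - x‖ ^ 2 := by
  set v := y - x
  let φ : ℝ → ℝ := fun t => f (x + t • v) - f x - t * ⟪gradient f x, v⟫
  have hφ : ∀ t, HasDerivAt φ ⟪gradient f (x + t • v) - gradient f x, v⟫ t := by
    intro t
    have hline : HasDerivAt (fun t : ℝ => x + t • v) v t := by
      simpa using ((hasDerivAt_id t).smul_const v).const_add x
    have := (((hf _).hasGradientAt.hasFDerivAt.comp_hasDerivAt t hline).sub_const (f x)).sub
      ((hasDerivAt_id t).mul_const ⟪gradient f x, v⟫)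
    exact this.congr_deriv (by rw [inner_sub_left]; simp)
  have hB : ∀ t, HasDerivAt (fun t => L / 2 * ‖v‖ ^ 2 * t ^ 2) (L * ‖v‖ ^ 2 * t) t := by
    intro t
    exact ((hasDerivAt_pow 2 t).const_mul (L / 2 * ‖v‖ ^ 2)).congr_deriv (by norm_num; ring)
  have bound : ∀ t ∈ Set.Ico (0 : ℝ) 1,
      ‖⟪gradient f (x + t • v) - gradient f x, v⟫‖ ≤ L * ‖v‖ ^ 2 * t := by
    rintro t ⟨ht, -⟩
    calc ‖⟪gradient f (x + t • v) - gradient f x, v⟫‖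
        ≤ ‖gradient f (x + t • v) - gradient f x‖ * ‖v‖ := norm_inner_le_norm _ _
      _ ≤ L * ‖t • v‖ * ‖v‖ := by
          gcongr
          simpa [dist_eq_norm] using hL.dist_le_mul (x + t • v) x
      _ = L * ‖v‖ ^ 2 * t := by rw [norm_smul, Real.norm_of_nonneg ht]; ring
  have := image_norm_le_of_norm_deriv_right_le_deriv_boundary
    (fun t _ => (hφ t).continuousAt.continuousWithinAt) (fun t _ => (hφ t).hasDerivWithinAt)
    (by simp [φ]) hB bound (x := 1) ⟨zero_le_one, le_rfl⟩
  simpa [φ, v] using this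

lemma mul_norm_le_of_forall_abs_inner_le {E : Type*} [NormedAddCommGroup E]
    [InnerProductSpace ℝ E] {d : E} {Δ C : ℝ} (hΔ : 0 < Δ)
    (h : ∀ u : E, ‖u‖ ≤ Δ → |⟪d, u⟫| ≤ C) : Δ * ‖d‖ ≤ C := by
  rcases eq_or_ne d 0 with rfl | hd
  · simpa using h 0 (by simpa using hΔ.le)
  have hd' : ‖d‖ ≠ 0 := norm_ne_zero_iff.2 hd
  calc Δ * ‖d‖ = |⟪d, (Δ / ‖d‖) • d⟫| := by
        rw [real_inner_smul_right, real_inner_self_eq_norm_sq, abs_of_nonneg (by positivity)]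
        field_simp
    _ ≤ C := h _ (by rw [norm_smul, Real.norm_of_nonneg (by positivity), div_mul_cancel₀ _ hd'])

lemma norm_sub_le_of_forall_abs_qm_sub_le {n : ℕ} {x g a : EuclideanSpace ℝ (Fin n)}
    {c b Δ κ : ℝ} {H : Matrix (Fin n) (Fin n) ℝ} (hΔ : 0 < Δ)
    (h : ∀ y ∈ closedBall x Δ, |qm x c g H y - b - ⟪a, y - x⟫| ≤ κ * Δ ^ 2) :
    ‖g - a‖ ≤ κ * Δ := by
  have hinner : ∀ u, ‖u‖ ≤ Δ → |⟪g - a, u⟫| ≤ κ * Δ ^ 2 := by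
    intro u hu
    have hplus := abs_le.1 (h (x + u) (by simpa [dist_eq_norm] using hu))
    have hminus := abs_le.1 (h (x - u) (by simpa [dist_eq_norm] using hu))
    have hodd : qm x c g H (x + u) - b - ⟪a, x + u - x⟫ - (qm x c g H (x - u) - b - ⟪a, x - u - x⟫)
        = 2 * ⟪g - a, u⟫ := by
      simp only [qm, add_sub_cancel_left, sub_sub_cancel_left, inner_neg_left, inner_neg_right,
        inner_sub_left, mulVecE_eq_toEuclideanCLM, map_neg]
      ring
    rw [abs_le]
    constructor <;> linarith
  have := mul_norm_le_of_forall_abs_inner_le hΔ hinner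
  exact le_of_mul_le_mul_left (by linarith) hΔ

theorem fully_linear_of_taylor_accuracy_general {n : ℕ}
    (f : EuclideanSpace ℝ (Fin n) → ℝ) (hf : Differentiable ℝ f)
    (Lg : NNReal) (hLip : LipschitzWith Lg (gradient f))
    (x : EuclideanSpace ℝ (Fin n)) (Δ : ℝ) (hΔ : 0 < Δ)
    (κ : ℝ) (κH : ℝ)
    (c : ℝ) (g : EuclideanSpace ℝ (Fin n)) (H : Matrix (Fin n) (Fin n) ℝ)
    (hHsymm : H.IsSymm) (hHnorm : opNorm H ≤ κH)
    (m : EuclideanSpace ℝ (Fin n) → ℝ) (hm : ∀ y, m y = qm x c g H y)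
    (happrox : ∀ y ∈ closedBall x Δ,
      |m y - f x - ⟪gradient f x, y - x⟫| ≤ κ * Δ ^ 2) :
    IsFullyLinear f m x Δ (κ + (Lg : ℝ) / 2) (2 * κ + (Lg : ℝ) + 2 * κH) := by
  obtain rfl : m = qm x c g H := funext hm
  have hg : ‖g - gradient f x‖ ≤ κ * Δ := norm_sub_le_of_forall_abs_qm_sub_le hΔ happrox
  intro y hy
  have hyx : ‖y - x‖ ≤ Δ := by rwa [← dist_eq_norm, ← mem_closedBall]
  constructor
  · have htaylor := abs_sub_sub_inner_le_of_lipschitzWith_gradient hf hLip x y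
    calc |qm x c g H y - f y|
        = |(qm x c g H y - f x - ⟪gradient f x, y - x⟫) - (f y - f x - ⟪gradient f x, y - x⟫)| := by
          congr 1
          ring
      _ ≤ κ * Δ ^ 2 + Lg / 2 * ‖y - x‖ ^ 2 :=
          (abs_sub _ _).trans (add_le_add (happrox y hy) htaylor)
      _ ≤ (κ + Lg / 2) * Δ ^ 2 := by rw [add_mul]; gcongr
  · have hHv : ‖mulVecE H (y - x)‖ ≤ κH * Δ :=
      (norm_mulVecE_le H _).trans
        (mul_le_mul hHnorm hyx (norm_nonneg _) ((opNorm_nonneg H).trans hHnorm))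
    have hLipΔ : ‖gradient f x - gradient f y‖ ≤ Lg * Δ := by
      rw [← dist_eq_norm, dist_comm]
      exact (hLip.dist_le_mul y x).trans (by gcongr; exact hy)
    calc ‖gradient (qm x c g H) y - gradient f y‖
        = ‖(g - gradient f x) + mulVecE H (y - x) + (gradient f x - gradient f y)‖ := by
          rw [(hasGradientAt_qm hHsymm x c g y).gradient]
          congr 1
          abel
      _ ≤ κ * Δ + κH * Δ + Lg * Δ := (norm_add₃_le).trans (by gcongr)
      _ ≤ (2 * κ + Lg + 2 * κH) * Δ := by
          linarith [norm_nonneg (g - gradient f x), norm_nonneg (mulVecE H (y - x))]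

/-- A quadratic model whose values are within `κ·Δ²` of the first-order Taylor series of `f`
on `B(x,Δ)` is fully linear with constants `κ_mf = κ + L_g/2`, `κ_mg = 2κ + L_g + 2κ_H`. -/
theorem fully_linear_of_taylor_accuracy {n : ℕ}
    (f : EuclideanSpace ℝ (Fin n) → ℝ) (hf : Differentiable ℝ f)
    (Lg : NNReal) (hLip : LipschitzWith Lg (gradient f))
    (x : EuclideanSpace ℝ (Fin n)) (Δ : ℝ) (hΔ : 0 < Δ)
    (κ : ℝ) (hκ : 0 < κ) (κH : ℝ) (hκH : 0 ≤ κH)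
    (c : ℝ) (g : EuclideanSpace ℝ (Fin n)) (H : Matrix (Fin n) (Fin n) ℝ)
    (hHsymm : H.IsSymm) (hHnorm : opNorm H ≤ κH)
    (m : EuclideanSpace ℝ (Fin n) → ℝ) (hm : ∀ y, m y = qm x c g H y)
    (happrox : ∀ y ∈ closedBall x Δ,
      |m y - f x - ⟪gradient f x, y - x⟫| ≤ κ * Δ ^ 2) :
    IsFullyLinear f m x Δ (κ + (Lg : ℝ) / 2) (2 * κ + (Lg : ℝ) + 2 * κH) :=
  fully_linear_of_taylor_accuracy_general f hf Lg hLip x Δ hΔ κ κH c g H hHsymm hHnorm m hm happrox
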